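/- The natural map E(K) ⊗_ℤ ℚp/ℤp → (E(L) ⊗_ℤ ℚp/ℤp)^G induced by the inclusion E(K) ⊆ E(L), whose image lands in the G-invariants, has finite kernel and finite cokernel. -/

import Mathlib

open PowerSeries

variable (p : ℕ) [Fact p.Prime]

abbrev Lam := PowerSeries ℤ_[p]

noncomputable def omeg (n : ℕ) : Lam p := (PowerSeries.X + 1) ^ (p ^ n) - 1

noncomputable def Phi (n : ℕ) : Lam p :=
  ((Polynomial.cyclotomic (p ^ n) ℤ_[p]).comp (Polynomial.X + 1) : Polynomial ℤ_[p])

abbrev QZ := ℚ_[p] ⧸ (LinearMap.range (Algebra.linearMap ℤ_[p] ℚ_[p]))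

/-- Contravariant module structure on the Pontryagin dual `N →+ ℚ_[p]/ℤ_[p]`:
`(c • f) x = f (c • x)`. -/
noncomputable instance dualSMul (R : Type*) [CommRing R] (N : Type*) [AddCommGroup N]
    [Module R N] : SMul R (N →+ QZ p) :=
  ⟨fun c f => f.comp (DistribMulAction.toAddMonoidHom N c)⟩

lemma dual_smul_apply (R : Type*) [CommRing R] (N : Type*) [AddCommGroup N] [Module R N]
    (c : R) (f : N →+ QZ p) (x : N) : (c • f) x = f (c • x) := rfl

noncomputable instance dualModule (R : Type*) [CommRing R] (N : Type*) [AddCommGroup N]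
    [Module R N] : Module R (N →+ QZ p) where
  one_smul f := by ext x; rw [dual_smul_apply, one_smul]
  mul_smul a b f := by
    ext x
    rw [dual_smul_apply, dual_smul_apply, dual_smul_apply, mul_comm, mul_smul]
  smul_zero a := by ext x; rw [dual_smul_apply]; rfl
  smul_add a f g := by
    ext x
    rw [dual_smul_apply, AddMonoidHom.add_apply, AddMonoidHom.add_apply,
      dual_smul_apply, dual_smul_apply]
  add_smul a b f := by
    ext x
    rw [dual_smul_apply, AddMonoidHom.add_apply, dual_smul_apply, dual_smul_apply,
      add_smul, map_add]
  zero_smul f := by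
    ext x
    rw [dual_smul_apply, zero_smul, map_zero]; rfl

/-- The p-primary torsion submodule. -/
def pTors (R : Type*) [CommRing R] (N : Type*) [AddCommGroup N] [Module R N] :
    Submodule R N where
  carrier := {x | ∃ k : ℕ, (p ^ k : ℕ) • x = 0}
  add_mem' := by
    rintro a b ⟨k, hk⟩ ⟨l, hl⟩
    exact ⟨k + l, by
      rw [smul_add, pow_add, mul_smul, mul_smul, hl, smul_zero, add_zero, smul_comm, hk,
        smul_zero]⟩
  zero_mem' := ⟨0, smul_zero _⟩
  smul_mem' := by
    rintro c x ⟨k, hk⟩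
    exact ⟨k, by rw [smul_comm, hk, smul_zero]⟩

/-- The p-adic Tate module of `N`, realized as compatible sequences in `∏ N[p^k]`. -/
def TateSub (R : Type*) [CommRing R] (N : Type*) [AddCommGroup N] [Module R N] :
    Submodule R (ℕ → N) where
  carrier := {f | (∀ k, (p ^ k : ℕ) • f k = 0) ∧ ∀ k, (p : ℕ) • f (k + 1) = f k}
  add_mem' := by
    rintro f g ⟨hf1, hf2⟩ ⟨hg1, hg2⟩
    refine ⟨fun k => ?_, fun k => ?_⟩
    · show (p ^ k : ℕ) • (f k + g k) = 0
      rw [smul_add, hf1 k, hg1 k, add_zero]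
    · show (p : ℕ) • (f (k + 1) + g (k + 1)) = f k + g k
      rw [smul_add, hf2 k, hg2 k]
  zero_mem' := ⟨fun k => smul_zero _, fun k => smul_zero _⟩
  smul_mem' := by
    rintro c f ⟨hf1, hf2⟩
    refine ⟨fun k => ?_, fun k => ?_⟩
    · show (p ^ k : ℕ) • (c • f k) = 0
      rw [smul_comm, hf1 k, smul_zero]
    · show (p : ℕ) • (c • f (k + 1)) = c • f k
      rw [smul_comm, hf2 k]

/-- The inverse limit of an inverse system of modules. -/
def invLim (R : Type*) [CommRing R] (N : ℕ → Type*) [∀ n, AddCommGroup (N n)]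
    [∀ n, Module R (N n)] (t : ∀ n, N (n + 1) →ₗ[R] N n) : Submodule R (∀ n, N n) where
  carrier := {f | ∀ n, t n (f (n + 1)) = f n}
  add_mem' := by
    intro f g hf hg n
    show t n (f (n + 1) + g (n + 1)) = f n + g n
    rw [map_add, hf n, hg n]
  zero_mem' := fun n => map_zero _
  smul_mem' := by
    intro c f hf n
    show t n (c • f (n + 1)) = c • f n
    rw [map_smul, hf n]

/-- The submodule `c • N` of a module `N`. -/
noncomputable def smulSub (R : Type*) [CommRing R] (N : Type*) [AddCommGroup N] [Module R N]
    (c : R) : Submodule R N :=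
  LinearMap.range (LinearMap.lsmul R N c)

/-- The `Γ_n`-coinvariants `N/ω_n N` of a `Λ`-module `N`. -/
abbrev coinv (n : ℕ) (N : Type*) [AddCommGroup N] [Module (Lam p) N] :=
  N ⧸ smulSub (Lam p) N (omeg p n)

lemma omeg_dvd (n : ℕ) : omeg p n ∣ omeg p (n + 1) := by
  have h := sub_dvd_pow_sub_pow ((PowerSeries.X + 1 : Lam p) ^ (p ^ n)) 1 p
  rw [← pow_mul, one_pow, ← pow_succ] at h
  exact h

/-- The natural projection between successive coinvariants. -/
noncomputable def coinvTrans (n : ℕ) (N : Type*) [AddCommGroup N] [Module (Lam p) N] :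
    coinv p (n + 1) N →ₗ[Lam p] coinv p n N :=
  Submodule.mapQ _ _ LinearMap.id
    (by
      rintro x ⟨m, rfl⟩
      obtain ⟨c, hc⟩ := omeg_dvd p n
      refine ⟨c • m, ?_⟩
      show omeg p n • c • m = LinearMap.id (omeg p (n + 1) • m)
      rw [smul_smul, ← hc]
      rfl)

section system

variable (M : ℕ → Type*) [∀ n, AddCommGroup (M n)] [∀ n, Module (Lam p) (M n)]
  (t : ∀ n, M (n + 1) →ₗ[Lam p] M n)

/-- `M = lim M_n`. -/
abbrev Mlim := ↥(invLim (Lam p) M t)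

/-- The projection from the limit to the `n`-th level. -/
noncomputable def projN (n : ℕ) : Mlim p M t →ₗ[Lam p] M n :=
  (LinearMap.proj n).comp (invLim (Lam p) M t).subtype

/-- The induced map `M_{Γ_n} → M_n`. -/
noncomputable def indMap (hω : ∀ n (x : M n), omeg p n • x = 0) (n : ℕ) :
    coinv p n (Mlim p M t) →ₗ[Lam p] M n :=
  Submodule.liftQ _ (projN p M t n)
    (by
      rintro x ⟨m, rfl⟩
      show projN p M t n (omeg p n • m) = 0
      rw [map_smul]
      exact hω n _)

/-- The transition maps on the torsion-free quotients `M_{n,f}`. -/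
noncomputable def tf (n : ℕ) :
    (M (n + 1) ⧸ pTors p (Lam p) (M (n + 1))) →ₗ[Lam p] (M n ⧸ pTors p (Lam p) (M n)) :=
  Submodule.mapQ _ _ (t n)
    (by
      rintro x ⟨k, hk⟩
      exact ⟨k, by rw [← map_nsmul, hk, map_zero]⟩)

/-- `M_f = lim M_{n,f}`. -/
abbrev Mf := ↥(invLim (Lam p) (fun n => M n ⧸ pTors p (Lam p) (M n)) (tf p M t))

end system

/-- The Pontryagin-dual map induced by a linear map. -/
noncomputable def dualMap (R : Type*) [CommRing R] {A B : Type*} [AddCommGroup A] [Module R A]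
    [AddCommGroup B] [Module R B] (f : A →ₗ[R] B) : (B →+ QZ p) →ₗ[R] (A →+ QZ p) where
  toFun g := g.comp f.toAddMonoidHom
  map_add' g₁ g₂ := by ext x; rfl
  map_smul' c g := by
    ext x
    show g (c • f x) = g (f (c • x))
    exact congrArg g (f.map_smul c x).symm

/-- The map on Tate modules induced by a linear map. -/
noncomputable def tateMap (R : Type*) [CommRing R] {N N' : Type*} [AddCommGroup N] [Module R N]
    [AddCommGroup N'] [Module R N'] (φ : N →ₗ[R] N') :
    ↥(TateSub p R N) →ₗ[R] ↥(TateSub p R N') where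
  toFun x := ⟨fun k => φ (x.1 k), by
    obtain ⟨h1, h2⟩ := x.2
    exact ⟨fun k => by rw [← map_nsmul, h1 k, map_zero],
      fun k => by rw [← map_nsmul, h2 k]⟩⟩
  map_add' x y := by ext k; exact map_add φ _ _
  map_smul' c x := by ext k; exact map_smul φ _ _

/-- The map on Tate modules induced by an additive endomorphism. -/
def tateAct (R : Type*) [CommRing R] {N : Type*} [AddCommGroup N] [Module R N] (g : N →+ N)
    (x : ↥(TateSub p R N)) : ↥(TateSub p R N) :=
  ⟨fun k => g (x.1 k), by
    obtain ⟨h1, h2⟩ := x.2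
    exact ⟨fun k => by rw [← map_nsmul, h1 k, map_zero],
      fun k => by rw [← map_nsmul, h2 k]⟩⟩

open Classical WeierstrassCurve WeierstrassCurve.Affine in
/-- The subgroup of `G = Gal(L/K)`-invariants of `E(L) ⊗_ℤ ℚp/ℤp`. -/
noncomputable def galInv (p : ℕ) [Fact p.Prime] (K L : Type) [Field K] [Field L] [Algebra K L]
    (W : WeierstrassCurve K) :
    AddSubgroup (TensorProduct ℤ (QZ p) ((W.toAffine⁄L).Point)) where
  carrier := {x | ∀ g : L ≃ₐ[K] L,
    TensorProduct.map (LinearMap.id (R := ℤ) (M := QZ p))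
      (Point.map (W' := W.toAffine) g.toAlgHom).toIntLinearMap x = x}
  add_mem' := by
    intro a b ha hb g
    rw [map_add, ha g, hb g]
  zero_mem' := fun g => map_zero _
  neg_mem' := by
    intro a ha g
    rw [map_neg, ha g]

/-!
Restriction–corestriction. The Galois norm `N = ∑_{g ∈ G} g` on `E(L)` takes values in
`E(L)^G = E(K)`, so it factors as `ι ∘ r` for a trace `r : E(L) → E(K)`, and `r ∘ ι = |G|`.
After tensoring with `ℚp/ℤp`, the kernel of `ι ⊗ 1` and the cokernel of `ι ⊗ 1` into the
invariants are therefore both killed by `|G|`. Since `ℚp/ℤp` is divisible with finite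
`n`-torsion, `ℚp/ℤp ⊗ M ≅ (ℚp/ℤp)^r` has finite `|G|`-torsion for finitely generated `M`.
This bounds the kernel, and also the cokernel: the image of `ι ⊗ 1` is divisible, so every
class of the cokernel has a `|G|`-torsion representative.
-/

namespace QZ

lemma mk_eq_zero_iff (x : ℚ_[p]) :
    (Submodule.Quotient.mk x : QZ p) = 0 ↔ ‖x‖ ≤ 1 := by
  rw [Submodule.Quotient.mk_eq_zero]
  exact ⟨by rintro ⟨z, rfl⟩; exact z.2, fun h => ⟨⟨x, h⟩, rfl⟩⟩

lemma exists_zsmul_eq (n : ℤ) (hn : n ≠ 0) (t : QZ p) : ∃ s, n • s = t := by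
  obtain ⟨q, rfl⟩ := Submodule.Quotient.mk_surjective _ t
  refine ⟨Submodule.Quotient.mk ((n : ℚ_[p])⁻¹ * q), ?_⟩
  rw [← Submodule.Quotient.mk_smul, zsmul_eq_mul, ← mul_assoc,
    mul_inv_cancel₀ (by exact_mod_cast hn), one_mul]

lemma finite_torsionBy_padicInt (x : ℤ_[p]) (hx : x ≠ 0) :
    Finite (Submodule.torsionBy ℤ_[p] (QZ p) x) := by
  have hx' : (x : ℚ_[p]) ≠ 0 := PadicInt.coe_ne_zero.mpr hx
  have : Finite (ℤ_[p] ⧸ Ideal.span {x}) :=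
    AddSubgroup.quotient_finite_of_isOpen (Ideal.span {x}).toAddSubgroup
      (IsDiscreteValuationRing.isOpen_iff.mpr (by simpa using hx))
  have hrep : ∀ t : Submodule.torsionBy ℤ_[p] (QZ p) x,
      ∃ z : ℤ_[p], Submodule.Quotient.mk ((z : ℚ_[p]) / x) = (t : QZ p) := by
    rintro ⟨t, ht⟩
    obtain ⟨q, rfl⟩ := Submodule.Quotient.mk_surjective _ t
    rw [Submodule.mem_torsionBy_iff, ← Submodule.Quotient.mk_smul, mk_eq_zero_iff] at ht
    exact ⟨⟨x * q, ht⟩, by simp [mul_div_cancel_left₀ _ hx']⟩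
  choose z hz using hrep
  refine Finite.of_injective (fun t => (Ideal.Quotient.mk _ (z t) : ℤ_[p] ⧸ Ideal.span {x})) ?_
  intro s t hst
  obtain ⟨w, hw⟩ := Ideal.mem_span_singleton'.mp (Ideal.Quotient.eq.mp hst)
  have hdiff : (z s : ℚ_[p]) / x - z t / x = w := by
    rw [div_sub_div_same, ← PadicInt.coe_sub, ← hw, PadicInt.coe_mul, mul_div_cancel_right₀ _ hx']
  apply Subtype.ext
  rw [← hz s, ← hz t, ← sub_eq_zero, ← Submodule.Quotient.mk_sub, mk_eq_zero_iff, hdiff]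
  exact w.2

lemma finite_torsionBy (n : ℤ) (hn : n ≠ 0) : Finite (Submodule.torsionBy ℤ (QZ p) n) := by
  have := finite_torsionBy_padicInt p n (by exact_mod_cast hn)
  refine Finite.Set.subset (Submodule.torsionBy ℤ_[p] (QZ p) n : Set (QZ p)) fun t ht => ?_
  rw [SetLike.mem_coe, Submodule.mem_torsionBy_iff] at ht ⊢
  rwa [Int.cast_smul_eq_zsmul]

end QZ

open LinearMap TensorProduct

section DivisibleTensor

variable {R : Type*} [CommRing R] {T : Type*} [AddCommGroup T] [Module R T]

lemma TensorProduct.exists_smul_eq_of_divisible (r : R) (hT : ∀ t : T, ∃ s, r • s = t)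
    (M : Type*) [AddCommGroup M] [Module R M] (x : T ⊗[R] M) : ∃ y, r • y = x := by
  induction x using TensorProduct.induction_on with
  | zero => exact ⟨0, smul_zero r⟩
  | tmul t m =>
    obtain ⟨s, rfl⟩ := hT t
    exact ⟨s ⊗ₜ m, (smul_tmul' r s m).symm⟩
  | add x y hx hy =>
    obtain ⟨x', rfl⟩ := hx
    obtain ⟨y', rfl⟩ := hy
    exact ⟨x' + y', smul_add r x' y'⟩

variable [IsDomain R] (hT : ∀ r : R, r ≠ 0 → ∀ t : T, ∃ s, r • s = t)
include hT

lemma lTensor_torsion_mkQ_bijective (M : Type*) [AddCommGroup M] [Module R M] :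
    Function.Bijective (lTensor T (Submodule.torsion R M).mkQ) := by
  refine ⟨?_, lTensor_surjective _ (Submodule.mkQ_surjective _)⟩
  rw [← LinearMap.ker_eq_bot, lTensor_mkQ, LinearMap.range_eq_bot]
  refine TensorProduct.ext' fun t ⟨m, ⟨r, hr⟩⟩ => ?_
  obtain ⟨s, rfl⟩ := hT r (nonZeroDivisors.coe_ne_zero r) t
  change (r : R) • m = 0 at hr
  change ((r : R) • s) ⊗ₜ[R] m = 0
  rw [smul_tmul, hr, tmul_zero]

noncomputable def tensorEquivPi [IsPrincipalIdealRing R] (M : Type*) [AddCommGroup M]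
    [Module R M] [Module.Finite R M] :
    (T ⊗[R] M) ≃ₗ[R] (Module.Free.ChooseBasisIndex R (M ⧸ Submodule.torsion R M) → T) :=
  (LinearEquiv.ofBijective _ (lTensor_torsion_mkQ_bijective hT M)).trans <|
    (TensorProduct.congr (LinearEquiv.refl R T)
      (Module.Free.chooseBasis R (M ⧸ Submodule.torsion R M)).equivFun).trans <|
    TensorProduct.piScalarRight R R T _

lemma finite_torsionBy_tensor [IsPrincipalIdealRing R]
    (hTfin : ∀ r : R, r ≠ 0 → Finite (Submodule.torsionBy R T r))
    (M : Type*) [AddCommGroup M] [Module R M] [Module.Finite R M] (r : R) (hr : r ≠ 0) :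
    Finite (Submodule.torsionBy R (T ⊗[R] M) r) := by
  have := hTfin r hr
  let e := tensorEquivPi hT M
  refine Finite.of_injective (fun x i => (⟨e x i, ?_⟩ : Submodule.torsionBy R T r)) ?_
  · rw [Submodule.mem_torsionBy_iff, ← Pi.smul_apply, ← map_smul,
      (Submodule.mem_torsionBy_iff r _).mp x.2, map_zero, Pi.zero_apply]
  · intro x y hxy
    exact Subtype.ext <| e.injective <| funext fun i => congrArg Subtype.val (congrFun hxy i)

end DivisibleTensor

lemma AddSubgroup.finite_quotient_of_zsmul_mem {V : Type*} [AddCommGroup V]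
    {I : AddSubgroup V} (S : AddSubgroup I) {n : ℤ} (hV : Finite (Submodule.torsionBy ℤ V n))
    (hS : ∀ s ∈ S, ∃ s' ∈ S, n • s' = s) (hI : ∀ x, n • x ∈ S) : Finite (I ⧸ S) := by
  refine Finite.of_surjective
    (fun v : {v : Submodule.torsionBy ℤ V n // (v : V) ∈ I} =>
      (QuotientAddGroup.mk ⟨v.1, v.2⟩ : I ⧸ S)) ?_
  intro c
  obtain ⟨x, rfl⟩ := QuotientAddGroup.mk_surjective c
  obtain ⟨s, hs, hsx⟩ := hS _ (hI x)
  refine ⟨⟨⟨x - s, ?_⟩, (x - s).2⟩, ?_⟩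
  · rw [Submodule.mem_torsionBy_iff, ← AddSubgroup.coe_sub,
      ← AddSubgroup.coe_zsmul, smul_sub, hsx, sub_self, AddSubgroup.coe_zero]
  · refine QuotientAddGroup.eq.mpr ?_
    change -(x - s) + x ∈ S
    rwa [neg_sub, sub_add_cancel]

namespace WeierstrassCurve.Affine.Point

variable (K L : Type*) [Field K] [Field L] [Algebra K L] [DecidableEq L] (W : WeierstrassCurve K)

noncomputable def galNorm [FiniteDimensional K L] :
    (W.toAffine⁄L).Point →ₗ[ℤ] (W.toAffine⁄L).Point :=
  ∑ g : L ≃ₐ[K] L, (Point.map (W' := W.toAffine) g.toAlgHom).toIntLinearMap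

lemma map_galNorm [FiniteDimensional K L] (g : L ≃ₐ[K] L) (P : (W.toAffine⁄L).Point) :
    Point.map (W' := W.toAffine) g.toAlgHom (galNorm K L W P) = galNorm K L W P := by
  simp only [galNorm, LinearMap.sum_apply, map_sum]
  exact Fintype.sum_equiv (Equiv.mulLeft g) _ _ fun h =>
    Point.map_map (W' := W.toAffine) h.toAlgHom g.toAlgHom P

variable [DecidableEq K]

lemma exists_baseChange_eq_of_forall_map_eq [FiniteDimensional K L] [IsGalois K L]
    (P : (W.toAffine⁄L).Point)
    (hP : ∀ g : L ≃ₐ[K] L, Point.map (W' := W.toAffine) g.toAlgHom P = P) :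
    ∃ Q : (W.toAffine⁄K).Point, Point.baseChange (W' := W.toAffine) K L Q = P := by
  rcases P with _ | ⟨x, y, h⟩
  · exact ⟨0, map_zero _⟩
  have hxy : ∀ g : L ≃ₐ[K] L, g x = x ∧ g y = y := fun g => by
    have hg := hP g
    rw [Point.map_some] at hg
    exact Point.some.inj hg
  obtain ⟨x₀, rfl⟩ := (IsGalois.mem_range_algebraMap_iff_fixed x).mpr fun g => (hxy g).1
  obtain ⟨y₀, rfl⟩ := (IsGalois.mem_range_algebraMap_iff_fixed _).mpr fun g => (hxy g).2
  exact ⟨Point.some _ _ ((W.toAffine.baseChange_nonsingular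
    (f := Algebra.ofId K L) (algebraMap K L).injective x₀ y₀).mp h), rfl⟩

lemma baseChange_injective :
    Function.Injective (Point.baseChange (W' := W.toAffine) K L) :=
  Point.map_injective (W' := W.toAffine) (Algebra.ofId K L)

variable (T : Type*) [AddCommGroup T]

lemma lTensor_map_baseChange (g : L ≃ₐ[K] L) (x : T ⊗[ℤ] (W.toAffine⁄K).Point) :
    lTensor T (Point.map (W' := W.toAffine) g.toAlgHom).toIntLinearMap
      (lTensor T (Point.baseChange (W' := W.toAffine) K L).toIntLinearMap x) =
      lTensor T (Point.baseChange (W' := W.toAffine) K L).toIntLinearMap x := by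
  rw [← lTensor_comp_apply]
  congr 2
  exact LinearMap.ext (Point.map_baseChange (W' := W.toAffine) g.toAlgHom)

variable [FiniteDimensional K L] [IsGalois K L]

noncomputable def galTrace : (W.toAffine⁄L).Point →ₗ[ℤ] (W.toAffine⁄K).Point :=
  (LinearEquiv.ofInjective (Point.baseChange (W' := W.toAffine) K L).toIntLinearMap
    (baseChange_injective K L W)).symm.toLinearMap ∘ₗ
    (galNorm K L W).codRestrict (Point.baseChange (W' := W.toAffine) K L).toIntLinearMap.range
      fun P => exists_baseChange_eq_of_forall_map_eq K L W _ fun g => map_galNorm K L W g P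

lemma baseChange_galTrace (P : (W.toAffine⁄L).Point) :
    Point.baseChange (W' := W.toAffine) K L (galTrace K L W P) = galNorm K L W P :=
  congrArg Subtype.val <| (LinearEquiv.ofInjective
    (Point.baseChange (W' := W.toAffine) K L).toIntLinearMap
    (baseChange_injective K L W)).apply_symm_apply _

lemma galTrace_baseChange (P : (W.toAffine⁄K).Point) :
    galTrace K L W (Point.baseChange (W' := W.toAffine) K L P) =
      Fintype.card (L ≃ₐ[K] L) • P := by
  apply baseChange_injective K L W
  rw [baseChange_galTrace, map_nsmul, galNorm, LinearMap.sum_apply]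
  simp only [AddMonoidHom.coe_toIntLinearMap, Point.map_baseChange]
  rw [Finset.sum_const, Finset.card_univ]

lemma lTensor_galTrace_baseChange (x : T ⊗[ℤ] (W.toAffine⁄K).Point) :
    lTensor T (galTrace K L W)
      (lTensor T (Point.baseChange (W' := W.toAffine) K L).toIntLinearMap x) =
      (Fintype.card (L ≃ₐ[K] L) : ℤ) • x := by
  have hcomp : galTrace K L W ∘ₗ (Point.baseChange (W' := W.toAffine) K L).toIntLinearMap =
      (Fintype.card (L ≃ₐ[K] L) : ℤ) • LinearMap.id :=
    LinearMap.ext fun P => (galTrace_baseChange K L W P).trans (natCast_zsmul _ _).symm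
  rw [← lTensor_comp_apply, hcomp, lTensor_smul, lTensor_id, LinearMap.smul_apply, id_apply]

lemma lTensor_baseChange_galTrace (x : T ⊗[ℤ] (W.toAffine⁄L).Point)
    (hx : ∀ g : L ≃ₐ[K] L,
      lTensor T (Point.map (W' := W.toAffine) g.toAlgHom).toIntLinearMap x = x) :
    lTensor T (Point.baseChange (W' := W.toAffine) K L).toIntLinearMap
      (lTensor T (galTrace K L W) x) = (Fintype.card (L ≃ₐ[K] L) : ℤ) • x := by
  have hcomp : (Point.baseChange (W' := W.toAffine) K L).toIntLinearMap ∘ₗ galTrace K L W =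
      galNorm K L W :=
    LinearMap.ext (baseChange_galTrace K L W)
  rw [← lTensor_comp_apply, hcomp, galNorm, ← coe_lTensorHom, map_sum, LinearMap.sum_apply]
  simp only [coe_lTensorHom, hx, Finset.sum_const, Finset.card_univ, natCast_zsmul]

end WeierstrassCurve.Affine.Point

open Classical WeierstrassCurve WeierstrassCurve.Affine in
theorem statement11_general (p : ℕ) [Fact p.Prime]
    (K L : Type) [Field K] [Field L]
    [Algebra K L] [FiniteDimensional K L] [IsGalois K L]
    (W : WeierstrassCurve K)
    (hMW : Module.Finite ℤ ((W.toAffine⁄L).Point)) :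
    ∃ ψ : TensorProduct ℤ (QZ p) ((W.toAffine⁄K).Point) →+ ↥(galInv p K L W),
      (∀ x, (ψ x : TensorProduct ℤ (QZ p) ((W.toAffine⁄L).Point)) =
        TensorProduct.map (LinearMap.id (R := ℤ) (M := QZ p))
          (Point.baseChange (W' := W.toAffine) K L).toIntLinearMap x) ∧
      Finite ψ.ker ∧
      Finite (↥(galInv p K L W) ⧸ ψ.range) := by
  set f := (Point.baseChange (W' := W.toAffine) K L).toIntLinearMap
  have : Module.Finite ℤ ((W.toAffine⁄K).Point) :=
    have := isNoetherian_of_isNoetherianRing_of_finite ℤ ((W.toAffine⁄L).Point)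
    Module.Finite.of_injective f (Point.baseChange_injective K L W)
  set n : ℤ := (Fintype.card (L ≃ₐ[K] L) : ℤ)
  have hn : n ≠ 0 := Int.natCast_ne_zero.mpr Fintype.card_ne_zero
  have hQZ := finite_torsionBy_tensor (QZ.exists_zsmul_eq p) (QZ.finite_torsionBy p)
  let ψ := (lTensor (QZ p) f).toAddMonoidHom.codRestrict (galInv p K L W)
    fun x g => Point.lTensor_map_baseChange K L W (QZ p) g x
  refine ⟨ψ, fun _ => rfl, ?_, ?_⟩
  · -- `@`: `hQZ` is about the tensor product's own `ℤ`-module structure, which is equal,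
    -- but not reducibly, to the one instance search finds.
    refine @Finite.Set.subset _ _ _ (hQZ _ n hn) fun x hx => ?_
    rw [SetLike.mem_coe, Submodule.mem_torsionBy_iff,
      ← Point.lTensor_galTrace_baseChange K L W (QZ p) x]
    exact (congrArg (lTensor (QZ p) (Point.galTrace K L W)) (congrArg Subtype.val hx)).trans
      (map_zero _)
  · refine AddSubgroup.finite_quotient_of_zsmul_mem ψ.range (hQZ _ n hn) ?_ fun x => ?_
    · rintro _ ⟨y, rfl⟩
      obtain ⟨y', rfl⟩ := TensorProduct.exists_smul_eq_of_divisible n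
        (QZ.exists_zsmul_eq p n hn) _ y
      exact ⟨ψ y', ⟨y', rfl⟩, (map_zsmul ψ n y').symm⟩
    · exact ⟨lTensor (QZ p) (Point.galTrace K L W) x,
        Subtype.ext (Point.lTensor_baseChange_galTrace K L W (QZ p) x x.2)⟩

open Classical WeierstrassCurve WeierstrassCurve.Affine in
/-- Let `L/K` be a finite Galois extension of number fields with Galois group
`G = Gal(L/K)` and let `E = W` be an elliptic curve over `K` (with `E(L)` finitely generated, by
the Mordell–Weil theorem).  The natural map `E(K) ⊗_ℤ ℚp/ℤp → (E(L) ⊗_ℤ ℚp/ℤp)^G` induced by the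
inclusion `E(K) ⊆ E(L)`, whose image lands in the `G`-invariants, has finite kernel and finite
cokernel. -/
theorem statement11 (p : ℕ) [Fact p.Prime] (hp5 : 5 ≤ p)
    (K L : Type) [Field K] [NumberField K] [Field L] [NumberField L]
    [Algebra K L] [FiniteDimensional K L] [IsGalois K L]
    (W : WeierstrassCurve K) [W.IsElliptic]
    (hMW : Module.Finite ℤ ((W.toAffine⁄L).Point)) :
    ∃ ψ : TensorProduct ℤ (QZ p) ((W.toAffine⁄K).Point) →+ ↥(galInv p K L W),
      (∀ x, (ψ x : TensorProduct ℤ (QZ p) ((W.toAffine⁄L).Point)) =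
        TensorProduct.map (LinearMap.id (R := ℤ) (M := QZ p))
          (Point.baseChange (W' := W.toAffine) K L).toIntLinearMap x) ∧
      Finite ψ.ker ∧
      Finite (↥(galInv p K L W) ⧸ ψ.range) :=
  statement11_general p K L W hMW
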